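/- arXiv:2107.12586 — 4 statements merged into one kernel-verified Lean document; each statement's English description precedes it below -/
import Mathlib

section
/- Under the same setup (V ~ N(0, λσ_u²) independent of Z, Gaussian kernel K_h with h > 0), for any fixed x ∈ ℝ: E[(Z + V − x) · K_h(Z + V − x) | Z] = (h²/(h² + λσ_u²)) · (Z − x) · φ(x; Z, h² + λσ_u²) almost surely. -/
open MeasureTheory ProbabilityTheory Real
open scoped NNReal ENNReal

/-- The normal density with mean `μ` and variance `σ2`, evaluated at `u`. -/
noncomputable def normalPDF (u μ σ2 : ℝ) : ℝ :=
  (Real.sqrt (2 * Real.pi * σ2))⁻¹ * Real.exp (-(u - μ)^2 / (2 * σ2))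

/-- Gaussian kernel with bandwidth `h`. -/
noncomputable def gaussKernel (h t : ℝ) : ℝ := h⁻¹ * normalPDF (t / h) 0 1

lemma gauss_moment {b : ℝ} (hb : 0 < b) : ∫ v : ℝ, v * Real.exp (-b * v ^ 2) = 0 := by
  have h := integral_neg_eq_self (fun v : ℝ => v * Real.exp (-b * v ^ 2)) volume
  simp only [neg_sq, neg_mul] at h
  rw [integral_neg] at h
  simp only [neg_mul]
  linarith

lemma integral_key {s τ : ℝ} (m : ℝ) (hs : 0 < s) (hτ : 0 < τ) :
    ∫ v : ℝ, (m + v) * ((Real.sqrt (2 * π * s))⁻¹ * Real.exp (-(m + v) ^ 2 / (2 * s))) *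
        ((Real.sqrt (2 * π * τ))⁻¹ * Real.exp (-v ^ 2 / (2 * τ)))
      = (s / (s + τ)) * m * ((Real.sqrt (2 * π * (s + τ)))⁻¹ *
          Real.exp (-m ^ 2 / (2 * (s + τ)))) := by
  have hst : 0 < s + τ := by linarith
  set c : ℝ := -m * τ / (s + τ) with hc
  set σ2 : ℝ := s * τ / (s + τ) with hσ2
  have hσ2pos : 0 < σ2 := by positivity
  have key : ∀ v : ℝ, (m + v) * ((Real.sqrt (2 * π * s))⁻¹ * Real.exp (-(m + v) ^ 2 / (2 * s))) *
      ((Real.sqrt (2 * π * τ))⁻¹ * Real.exp (-v ^ 2 / (2 * τ)))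
      = ((Real.sqrt (2 * π * s))⁻¹ * (Real.sqrt (2 * π * τ))⁻¹ * Real.exp (-m ^ 2 / (2 * (s + τ))))
        * ((m + v) * Real.exp (-(1 / (2 * σ2)) * (v - c) ^ 2)) := by
    intro v
    have hexp : -(m + v) ^ 2 / (2 * s) + -v ^ 2 / (2 * τ)
        = -m ^ 2 / (2 * (s + τ)) + -(1 / (2 * σ2)) * (v - c) ^ 2 := by
      rw [hc, hσ2]
      field_simp
      ring
    rw [show ((m + v) * ((Real.sqrt (2 * π * s))⁻¹ * Real.exp (-(m + v) ^ 2 / (2 * s))) *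
      ((Real.sqrt (2 * π * τ))⁻¹ * Real.exp (-v ^ 2 / (2 * τ)))) = ((Real.sqrt (2 * π * s))⁻¹ *
      (Real.sqrt (2 * π * τ))⁻¹) * ((m + v) * Real.exp (-(m + v) ^ 2 / (2 * s) + -v ^ 2 / (2 * τ)))
      by rw [Real.exp_add]; ring]
    rw [hexp, Real.exp_add]
    ring
  simp_rw [key]
  rw [integral_const_mul]
  have hsub : ∫ v : ℝ, (m + v) * Real.exp (-(1 / (2 * σ2)) * (v - c) ^ 2)
      = ∫ w : ℝ, (m + (w + c)) * Real.exp (-(1 / (2 * σ2)) * w ^ 2) := by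
    rw [← integral_add_right_eq_self (fun v : ℝ => (m + v) * Real.exp (-(1 / (2 * σ2)) * (v - c) ^ 2)) c]
    simp
  rw [hsub]
  have hb : 0 < 1 / (2 * σ2) := by positivity
  have hint : ∫ w : ℝ, (m + (w + c)) * Real.exp (-(1 / (2 * σ2)) * w ^ 2)
      = (m + c) * Real.sqrt (2 * π * σ2) := by
    have h1 : (fun w : ℝ => (m + (w + c)) * Real.exp (-(1 / (2 * σ2)) * w ^ 2))
        = fun w : ℝ => (m + c) * Real.exp (-(1 / (2 * σ2)) * w ^ 2)
          + w * Real.exp (-(1 / (2 * σ2)) * w ^ 2) := by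
      funext w; ring
    rw [h1, integral_add ((integrable_exp_neg_mul_sq hb).const_mul _)
        (integrable_mul_exp_neg_mul_sq hb), gauss_moment hb, add_zero,
      integral_const_mul, integral_gaussian]
    congr 2
    rw [one_div, div_eq_mul_inv, inv_inv]
    ring
  rw [hint]
  have hmc : m + c = s / (s + τ) * m := by rw [hc]; field_simp; ring
  have hsqrt : (Real.sqrt (2 * π * s))⁻¹ * (Real.sqrt (2 * π * τ))⁻¹ * Real.sqrt (2 * π * σ2)
      = (Real.sqrt (2 * π * (s + τ)))⁻¹ := by
    have h1 : Real.sqrt (2 * π * s) * Real.sqrt (2 * π * τ)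
        = Real.sqrt (2 * π * (s + τ)) * Real.sqrt (2 * π * σ2) := by
      rw [← Real.sqrt_mul (by positivity), ← Real.sqrt_mul (by positivity)]
      congr 1
      rw [hσ2]; field_simp
    have h3 : Real.sqrt (2 * π * σ2) ≠ 0 := by positivity
    rw [← mul_inv, h1, mul_inv, mul_assoc, inv_mul_cancel₀ h3, mul_one]
  calc (Real.sqrt (2 * π * s))⁻¹ * (Real.sqrt (2 * π * τ))⁻¹ * Real.exp (-m ^ 2 / (2 * (s + τ)))
      * ((m + c) * Real.sqrt (2 * π * σ2))
      = ((Real.sqrt (2 * π * s))⁻¹ * (Real.sqrt (2 * π * τ))⁻¹ * Real.sqrt (2 * π * σ2))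
        * (m + c) * Real.exp (-m ^ 2 / (2 * (s + τ))) := by ring
    _ = _ := by rw [hsqrt, hmc]; ring

lemma condexp_comp_indep {Ω : Type*} [MeasurableSpace Ω] (P : Measure Ω)
    [IsProbabilityMeasure P] (Z V : Ω → ℝ) (hZ : Measurable Z) (hV : Measurable V)
    (hindep : IndepFun Z V P) (f : ℝ → ℝ) (hf : Measurable f) (C : ℝ)
    (hbd : ∀ t, |f t| ≤ C) :
    P[fun ω => f (Z ω + V ω) | MeasurableSpace.comap Z (borel ℝ)]
      =ᵐ[P] fun ω => ∫ v, f (Z ω + v) ∂(Measure.map V P) := by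
  set ν : Measure ℝ := Measure.map V P with hν
  have hνprob : IsProbabilityMeasure ν := Measure.isProbabilityMeasure_map hV.aemeasurable
  have hm : MeasurableSpace.comap Z (borel ℝ) ≤ ‹MeasurableSpace Ω› := hZ.comap_le
  have : IsFiniteMeasure (P.trim hm) := isFiniteMeasure_trim hm
  set g : ℝ → ℝ := fun z => ∫ v, f (z + v) ∂ν with hg
  have hFm : StronglyMeasurable (fun p : ℝ × ℝ => f (p.1 + p.2)) :=
    (hf.comp (measurable_fst.add measurable_snd)).stronglyMeasurable
  have hgm : StronglyMeasurable g := hFm.integral_prod_right'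
  have hgbd : ∀ z, ‖g z‖ ≤ C := by
    intro z
    calc ‖g z‖ ≤ C * (ν Set.univ).toReal :=
          norm_integral_le_of_norm_le_const (Filter.Eventually.of_forall fun v => by
            simpa [Real.norm_eq_abs] using hbd (z + v))
      _ = C := by simp
  have hfint : Integrable (fun ω => f (Z ω + V ω)) P :=
    (integrable_const C).mono' ((hf.comp (hZ.add hV)).aestronglyMeasurable)
      (Filter.Eventually.of_forall fun ω => by simpa [Real.norm_eq_abs] using hbd (Z ω + V ω))
  have hmap : Measure.map (fun ω => (Z ω, V ω)) P = (Measure.map Z P).prod ν :=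
    (indepFun_iff_map_prod_eq_prod_map_map hZ.aemeasurable hV.aemeasurable).mp hindep
  have hZPprob : IsProbabilityMeasure (Measure.map Z P) := Measure.isProbabilityMeasure_map hZ.aemeasurable
  have hFprodint : Integrable (fun p : ℝ × ℝ => f (p.1 + p.2)) ((Measure.map Z P).prod ν) :=
    (integrable_const C).mono' hFm.aestronglyMeasurable
      (Filter.Eventually.of_forall fun p => by simpa [Real.norm_eq_abs] using hbd (p.1 + p.2))
  refine (ae_eq_condExp_of_forall_setIntegral_eq hm hfint ?_ ?_ ?_).symm
  · intro s _ _
    exact ((integrable_const C).mono' ((hgm.comp_measurable hZ).aestronglyMeasurable)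
      (Filter.Eventually.of_forall fun ω => hgbd (Z ω))).integrableOn
  · rintro s ⟨t, ht, rfl⟩ -
    have ht' : MeasurableSet t := ht
    have hpre : Z ⁻¹' t = (fun ω => (Z ω, V ω)) ⁻¹' (t ×ˢ (Set.univ : Set ℝ)) := by
      ext ω; simp
    rw [hpre]
    have h1 : ∫ ω in (fun ω => (Z ω, V ω)) ⁻¹' (t ×ˢ (Set.univ : Set ℝ)),
        f (Z ω + V ω) ∂P
        = ∫ p in t ×ˢ (Set.univ : Set ℝ), f (p.1 + p.2)
            ∂((Measure.map Z P).prod ν) := by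
      rw [← hmap, ← setIntegral_map (ht'.prod MeasurableSet.univ)
        (hFm.aestronglyMeasurable) (hZ.prodMk hV).aemeasurable]
    have h2 : ∫ p in t ×ˢ (Set.univ : Set ℝ), f (p.1 + p.2)
        ∂((Measure.map Z P).prod ν)
        = ∫ z in t, g z ∂(Measure.map Z P) := by
      rw [setIntegral_prod _ hFprodint.integrableOn]
      simp [hg, Measure.restrict_univ]
    have h3 : ∫ z in t, g z ∂(Measure.map Z P) = ∫ ω in Z ⁻¹' t, g (Z ω) ∂P :=
      setIntegral_map ht' hgm.aestronglyMeasurable hZ.aemeasurable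
    rw [h1, h2, h3, hpre]
  · have hZc : @Measurable Ω ℝ (MeasurableSpace.comap Z (borel ℝ)) (borel ℝ) Z :=
      measurable_iff_comap_le.mpr le_rfl
    exact ((hgm.measurable.comp hZc).stronglyMeasurable).aestronglyMeasurable

lemma gaussKernel_eq {h : ℝ} (hh : 0 < h) (t : ℝ) :
    gaussKernel h t = (Real.sqrt (2 * π * h ^ 2))⁻¹ * Real.exp (-t ^ 2 / (2 * h ^ 2)) := by
  rw [gaussKernel, normalPDF]
  have h1 : Real.sqrt (2 * π * h ^ 2) = Real.sqrt (2 * π * 1) * h := by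
    rw [mul_one, show (2 * π * h ^ 2 : ℝ) = (2 * π) * h ^ 2 by ring,
      Real.sqrt_mul (by positivity), Real.sqrt_sq hh.le]
  have h2 : -(t / h - 0) ^ 2 / (2 * 1) = -t ^ 2 / (2 * h ^ 2) := by
    rw [sub_zero, mul_one, div_pow, neg_div, div_div, neg_div, mul_comm (h ^ 2) 2]
  rw [h1, h2, mul_inv]
  ring

lemma integral_gaussianReal' (τ : ℝ) (hτ : 0 < τ) (f : ℝ → ℝ) :
    ∫ v, f v ∂(gaussianReal 0 (Real.toNNReal τ))
      = ∫ v, gaussianPDFReal 0 (Real.toNNReal τ) v * f v := by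
  have hne : Real.toNNReal τ ≠ 0 := by
    simp [Real.toNNReal_eq_zero, not_le, hτ]
  rw [gaussianReal_of_var_ne_zero _ hne]
  have : (gaussianPDF 0 (Real.toNNReal τ))
      = fun v => ((Real.toNNReal (gaussianPDFReal 0 (Real.toNNReal τ) v) : ℝ≥0) : ℝ≥0∞) := by
    funext v; rfl
  rw [this, integral_withDensity_eq_integral_smul₀
    ((measurable_gaussianPDFReal 0 (Real.toNNReal τ)).real_toNNReal.aemeasurable)]
  congr 1
  funext v
  rw [NNReal.smul_def, smul_eq_mul, Real.coe_toNNReal _ (gaussianPDFReal_nonneg _ _ _)]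

lemma abs_mul_gaussKernel_le {h : ℝ} (hh : 0 < h) (t : ℝ) : |t * gaussKernel h t| ≤ 1 := by
  have e1 : t * gaussKernel h t
      = (t / h) * ((Real.sqrt (2 * π * 1))⁻¹ * Real.exp (-(t / h - 0) ^ 2 / (2 * 1))) := by
    rw [gaussKernel, normalPDF, div_eq_mul_inv]
    ring
  set u : ℝ := t / h
  have hu : |u| * Real.exp (-u ^ 2 / 2) ≤ 1 := by
    have h1 : |u| ≤ Real.exp (u ^ 2 / 2) := by
      have := Real.add_one_le_exp (u ^ 2 / 2)
      nlinarith [sq_nonneg (|u| - 1), sq_abs u, abs_nonneg u]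
    calc |u| * Real.exp (-u ^ 2 / 2) ≤ Real.exp (u ^ 2 / 2) * Real.exp (-u ^ 2 / 2) :=
          mul_le_mul_of_nonneg_right h1 (Real.exp_pos _).le
      _ = 1 := by rw [← Real.exp_add, show u ^ 2 / 2 + -u ^ 2 / 2 = (0:ℝ) by ring, Real.exp_zero]
  have hA : (Real.sqrt (2 * π * 1))⁻¹ ≤ 1 := by
    rw [inv_le_one_iff₀]
    right
    rw [show (2 * π * 1 : ℝ) = 2 * π by ring]
    nlinarith [Real.sq_sqrt (by positivity : (0:ℝ) ≤ 2 * π), Real.sqrt_nonneg (2 * π),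
      Real.pi_gt_three]
  rw [e1, sub_zero, show -u ^ 2 / (2 * 1) = -u ^ 2 / 2 by norm_num, abs_mul, abs_mul,
    abs_of_nonneg (by positivity : (0:ℝ) ≤ (Real.sqrt (2 * π * 1))⁻¹),
    abs_of_nonneg (Real.exp_pos _).le]
  calc |u| * ((Real.sqrt (2 * π * 1))⁻¹ * Real.exp (-u ^ 2 / 2))
      ≤ |u| * (1 * Real.exp (-u ^ 2 / 2)) := by
        apply mul_le_mul_of_nonneg_left _ (abs_nonneg u)
        exact mul_le_mul_of_nonneg_right hA (Real.exp_pos _).le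
    _ = |u| * Real.exp (-u ^ 2 / 2) := by ring
    _ ≤ 1 := hu

theorem condexp_linear_gaussKernel {Ω : Type*} [MeasurableSpace Ω] (P : Measure Ω)
    [IsProbabilityMeasure P] (Z V : Ω → ℝ) (hZ : Measurable Z) (hV : Measurable V)
    (h lam σu : ℝ) (hh : 0 < h) (hlam : 0 < lam) (hσu : 0 < σu)
    (hindep : IndepFun Z V P)
    (hVlaw : Measure.map V P = gaussianReal 0 (Real.toNNReal (lam * σu^2)))
    (x : ℝ) :
    P[(fun ω => (Z ω + V ω - x) * gaussKernel h (Z ω + V ω - x)) |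
        MeasurableSpace.comap Z (borel ℝ)]
      =ᵐ[P] fun ω =>
        (h^2 / (h^2 + lam * σu^2)) * (Z ω - x) * normalPDF x (Z ω) (h^2 + lam * σu^2) := by
  set τ : ℝ := lam * σu ^ 2 with hτdef
  have hτ : 0 < τ := by positivity
  set f : ℝ → ℝ := fun t => (t - x) * gaussKernel h (t - x) with hf
  have hfm : Measurable f := by
    simp only [hf, gaussKernel, normalPDF]
    fun_prop
  have hfbd : ∀ t, |f t| ≤ 1 := fun t => abs_mul_gaussKernel_le hh (t - x)
  have h0 := condexp_comp_indep P Z V hZ hV hindep f hfm 1 hfbd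
  have hτc : ((Real.toNNReal τ) : ℝ) = τ := Real.coe_toNNReal _ hτ.le
  refine h0.trans (Filter.Eventually.of_forall fun ω => ?_)
  set z : ℝ := Z ω
  have hpt : ∀ v : ℝ, gaussianPDFReal 0 (Real.toNNReal τ) v * f (z + v)
      = ((z - x) + v) * ((Real.sqrt (2 * π * h ^ 2))⁻¹ *
          Real.exp (-((z - x) + v) ^ 2 / (2 * h ^ 2))) *
        ((Real.sqrt (2 * π * τ))⁻¹ * Real.exp (-v ^ 2 / (2 * τ))) := by
    intro v
    have e : z + v - x = (z - x) + v := by ring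
    rw [hf, gaussianPDFReal, hτc]
    simp only [e, gaussKernel_eq hh, sub_zero]
    ring
  show (∫ v, f (z + v) ∂(Measure.map V P))
      = h ^ 2 / (h ^ 2 + τ) * (z - x) * normalPDF x z (h ^ 2 + τ)
  rw [hVlaw, integral_gaussianReal' τ hτ]
  simp_rw [hpt]
  rw [integral_key (z - x) (by positivity : (0:ℝ) < h ^ 2) hτ, normalPDF]
  rw [show (x - z) ^ 2 = (z - x) ^ 2 by ring]
end

section
/- Under the same setup (V ~ N(0, λσ_u²) independent of Z, Gaussian kernel K_h with h > 0), for any fixed x ∈ ℝ: E[(Z + V − x)² · K_h(Z + V − x) | Z] = (h⁴/(h² + λσ_u²)²)(Z − x)² φ(x; Z, h² + λσ_u²) + (λσ_u²h²/(h² + λσ_u²)) φ(x; Z, h² + λσ_u²) almost surely. -/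
open MeasureTheory ProbabilityTheory Real

open Filter

section Aux

lemma tendsto_mul_exp_neg_mul_sq_atTop {b : ℝ} (hb : 0 < b) :
    Tendsto (fun x : ℝ => x * Real.exp (-b * x ^ 2)) atTop (nhds 0) := by
  have h := rpow_mul_exp_neg_mul_sq_isLittleO_exp_neg hb 1
  have h2 : Tendsto (fun x : ℝ => Real.exp (-(1/2) * x)) atTop (nhds 0) :=
    Real.tendsto_exp_atBot.comp (Tendsto.const_mul_atTop_of_neg (by norm_num) tendsto_id)
  have h3 := h.trans_isBigO (Asymptotics.isBigO_refl _ _) |>.tendsto_zero_of_tendsto h2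
  refine h3.congr' ?_
  filter_upwards [eventually_gt_atTop (0:ℝ)] with x hx
  rw [Real.rpow_one]

lemma sq_mul_exp_neg_mul_sq_le {b : ℝ} (hb : 0 < b) (x : ℝ) :
    x ^ 2 * Real.exp (-b * x ^ 2) ≤ 2 / b := by
  have h1 : (b/2) * x^2 ≤ Real.exp ((b/2) * x^2) := (Real.add_one_le_exp _).trans' (by linarith)
  have h2 : x ^ 2 ≤ (2/b) * Real.exp ((b/2) * x ^ 2) := by
    rw [div_mul_eq_mul_div, le_div_iff₀ hb]
    nlinarith
  calc x ^ 2 * Real.exp (-b * x ^ 2)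
      ≤ (2/b) * Real.exp ((b/2) * x ^ 2) * Real.exp (-b * x ^ 2) :=
        mul_le_mul_of_nonneg_right h2 (Real.exp_nonneg _)
    _ = (2/b) * Real.exp (-(b/2) * x ^ 2) := by rw [mul_assoc, ← Real.exp_add]; ring_nf
    _ ≤ (2/b) * 1 := by
        refine mul_le_mul_of_nonneg_left ?_ (by positivity)
        rw [Real.exp_le_one_iff]
        nlinarith [sq_nonneg x]
    _ = 2/b := mul_one _

lemma integrable_sq_mul_exp_neg_mul_sq {b : ℝ} (hb : 0 < b) :
    Integrable (fun x : ℝ => x ^ 2 * Real.exp (-b * x ^ 2)) := by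
  have hbound : ∀ x : ℝ, ‖x ^ 2 * Real.exp (-b * x ^ 2)‖ ≤ (2/b) * Real.exp (-(b/2) * x ^ 2) := by
    intro x
    rw [Real.norm_eq_abs, abs_mul, abs_of_nonneg (Real.exp_nonneg _), abs_of_nonneg (sq_nonneg x)]
    have h1 : (b/2) * x^2 ≤ Real.exp ((b/2) * x^2) := (Real.add_one_le_exp _).trans' (by linarith)
    have h2 : x ^ 2 ≤ (2/b) * Real.exp ((b/2) * x ^ 2) := by
      rw [div_mul_eq_mul_div, le_div_iff₀ hb]
      nlinarith
    calc x ^ 2 * Real.exp (-b * x ^ 2)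
        ≤ (2/b) * Real.exp ((b/2) * x ^ 2) * Real.exp (-b * x ^ 2) :=
          mul_le_mul_of_nonneg_right h2 (Real.exp_nonneg _)
      _ = (2/b) * Real.exp (-(b/2) * x ^ 2) := by rw [mul_assoc, ← Real.exp_add]; ring_nf
  refine Integrable.mono' ((integrable_exp_neg_mul_sq (by positivity : (0:ℝ) < b/2)).const_mul (2/b))
    ?_ (Filter.Eventually.of_forall hbound)
  exact ((continuous_pow 2).mul (Real.continuous_exp.comp (by fun_prop))).aestronglyMeasurable

lemma integral_id_mul_exp_neg_mul_sq {b : ℝ} (hb : 0 < b) :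
    ∫ x : ℝ, x * Real.exp (-b * x ^ 2) = 0 := by
  have h := integral_neg_eq_self (fun x : ℝ => x * Real.exp (-b * x ^ 2)) volume
  simp only [neg_sq, neg_mul] at h
  rw [MeasureTheory.integral_neg] at h
  simp only [neg_mul]
  linarith [h]

lemma integral_sq_mul_exp_neg_mul_sq {b : ℝ} (hb : 0 < b) :
    ∫ x : ℝ, x ^ 2 * Real.exp (-b * x ^ 2) = Real.sqrt (Real.pi / b) / (2 * b) := by
  have hderiv : ∀ x : ℝ, HasDerivAt (fun x : ℝ => -(2*b)⁻¹ * x * Real.exp (-b * x ^ 2))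
      (x ^ 2 * Real.exp (-b * x ^ 2) - (2*b)⁻¹ * Real.exp (-b * x ^ 2)) x := by
    intro x
    have h1 : HasDerivAt (fun x : ℝ => -(2*b)⁻¹ * x) (-(2*b)⁻¹) x := by
      simpa using (hasDerivAt_id x).const_mul (-(2*b)⁻¹)
    have h2 : HasDerivAt (fun x : ℝ => Real.exp (-b * x ^ 2))
        (Real.exp (-b * x ^ 2) * (-b * (2*x))) x := by
      have := ((hasDerivAt_pow 2 x).const_mul (-b)).exp
      simpa using this
    have := h1.mul h2
    refine this.congr_deriv ?_
    have hc : (2*b)⁻¹ * (2*b) = 1 := inv_mul_cancel₀ (by positivity)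
    linear_combination (x^2 * Real.exp (-b * x ^ 2)) * hc
  have hint : Integrable (fun x : ℝ => x ^ 2 * Real.exp (-b * x ^ 2) - (2*b)⁻¹ * Real.exp (-b * x ^ 2)) :=
    (integrable_sq_mul_exp_neg_mul_sq hb).sub ((integrable_exp_neg_mul_sq hb).const_mul _)
  have htop : Tendsto (fun x : ℝ => -(2*b)⁻¹ * x * Real.exp (-b * x ^ 2)) atTop (nhds 0) := by
    have := (tendsto_mul_exp_neg_mul_sq_atTop hb).const_mul (-(2*b)⁻¹)
    simpa [mul_assoc] using this
  have hbot : Tendsto (fun x : ℝ => -(2*b)⁻¹ * x * Real.exp (-b * x ^ 2)) atBot (nhds 0) := by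
    have h4 := (htop.comp tendsto_neg_atBot_atTop).neg
    rw [neg_zero] at h4
    refine h4.congr fun x => ?_
    simp only [Function.comp]
    ring_nf
  have key := MeasureTheory.integral_of_hasDerivAt_of_tendsto hderiv hint hbot htop
  rw [sub_zero] at key
  rw [MeasureTheory.integral_sub (integrable_sq_mul_exp_neg_mul_sq hb)
    ((integrable_exp_neg_mul_sq hb).const_mul _), MeasureTheory.integral_const_mul,
    integral_gaussian] at key
  have : ∫ x : ℝ, x ^ 2 * Real.exp (-b * x ^ 2) = (2*b)⁻¹ * Real.sqrt (Real.pi / b) := by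
    linarith [key]
  rw [this]; ring

lemma normalPDF_eq (t m τ : ℝ) :
    normalPDF t m τ = (Real.sqrt (2 * Real.pi * τ))⁻¹ * Real.exp (-(2*τ)⁻¹ * (t - m)^2) := by
  unfold normalPDF
  congr 1
  ring

lemma normalPDF_nonneg (t m τ : ℝ) : 0 ≤ normalPDF t m τ := by
  unfold normalPDF
  positivity

lemma sqrt_two_pi_mul {τ : ℝ} (hτ : 0 < τ) :
    Real.sqrt (Real.pi / (2*τ)⁻¹) = Real.sqrt (2 * Real.pi * τ) := by
  congr 1
  field_simp

lemma integrable_normalPDF {τ : ℝ} (hτ : 0 < τ) (m : ℝ) :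
    Integrable (fun t => normalPDF t m τ) := by
  simp only [normalPDF_eq]
  exact (((integrable_exp_neg_mul_sq (by positivity : (0:ℝ) < (2*τ)⁻¹)).comp_sub_right m).const_mul _)

lemma integrable_sub_mul_normalPDF {τ : ℝ} (hτ : 0 < τ) (m : ℝ) :
    Integrable (fun t => (t - m) * normalPDF t m τ) := by
  simp only [normalPDF_eq]
  have := (((integrable_mul_exp_neg_mul_sq (by positivity : (0:ℝ) < (2*τ)⁻¹)).comp_sub_right m).const_mul
    ((Real.sqrt (2 * Real.pi * τ))⁻¹))
  refine this.congr (Filter.Eventually.of_forall fun t => ?_)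
  simp only
  ring

lemma integrable_sub_sq_mul_normalPDF {τ : ℝ} (hτ : 0 < τ) (m : ℝ) :
    Integrable (fun t => (t - m)^2 * normalPDF t m τ) := by
  simp only [normalPDF_eq]
  have := (((integrable_sq_mul_exp_neg_mul_sq (by positivity : (0:ℝ) < (2*τ)⁻¹)).comp_sub_right m).const_mul
    ((Real.sqrt (2 * Real.pi * τ))⁻¹))
  refine this.congr (Filter.Eventually.of_forall fun t => ?_)
  simp only
  ring

lemma integral_normalPDF {τ : ℝ} (hτ : 0 < τ) (m : ℝ) :
    ∫ t, normalPDF t m τ = 1 := by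
  simp only [normalPDF_eq]
  rw [MeasureTheory.integral_const_mul,
    MeasureTheory.integral_sub_right_eq_self (fun x => Real.exp (-(2*τ)⁻¹ * x^2)) m,
    integral_gaussian, sqrt_two_pi_mul hτ, inv_mul_cancel₀ (by positivity)]

lemma integral_sub_mul_normalPDF {τ : ℝ} (hτ : 0 < τ) (m : ℝ) :
    ∫ t, (t - m) * normalPDF t m τ = 0 := by
  simp only [normalPDF_eq]
  have heq : ∀ t : ℝ, (t - m) * ((Real.sqrt (2 * Real.pi * τ))⁻¹ * Real.exp (-(2*τ)⁻¹ * (t - m)^2))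
      = (Real.sqrt (2 * Real.pi * τ))⁻¹ * ((t - m) * Real.exp (-(2*τ)⁻¹ * (t - m)^2)) := by
    intro t; ring
  simp only [heq]
  rw [MeasureTheory.integral_const_mul,
    MeasureTheory.integral_sub_right_eq_self (fun x => x * Real.exp (-(2*τ)⁻¹ * x^2)) m,
    integral_id_mul_exp_neg_mul_sq (by positivity), mul_zero]

lemma integral_sub_sq_mul_normalPDF {τ : ℝ} (hτ : 0 < τ) (m : ℝ) :
    ∫ t, (t - m)^2 * normalPDF t m τ = τ := by
  simp only [normalPDF_eq]
  have heq : ∀ t : ℝ, (t - m)^2 * ((Real.sqrt (2 * Real.pi * τ))⁻¹ * Real.exp (-(2*τ)⁻¹ * (t - m)^2))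
      = (Real.sqrt (2 * Real.pi * τ))⁻¹ * ((t - m)^2 * Real.exp (-(2*τ)⁻¹ * (t - m)^2)) := by
    intro t; ring
  simp only [heq]
  rw [MeasureTheory.integral_const_mul,
    MeasureTheory.integral_sub_right_eq_self (fun x => x^2 * Real.exp (-(2*τ)⁻¹ * x^2)) m,
    integral_sq_mul_exp_neg_mul_sq (by positivity), sqrt_two_pi_mul hτ]
  rw [show (2 * (2*τ)⁻¹ : ℝ) = τ⁻¹ by field_simp, show ∀ a : ℝ, a / τ⁻¹ = a * τ from fun a => by field_simp, ← mul_assoc,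
    inv_mul_cancel₀ (by positivity : Real.sqrt (2 * Real.pi * τ) ≠ 0), one_mul]

lemma integral_sq_mul_normalPDF {τ : ℝ} (hτ : 0 < τ) (m : ℝ) :
    ∫ t, t^2 * normalPDF t m τ = m^2 + τ := by
  have heq : ∀ t : ℝ, t^2 * normalPDF t m τ
      = (t - m)^2 * normalPDF t m τ + (2*m) * ((t-m) * normalPDF t m τ) + m^2 * normalPDF t m τ := by
    intro t; ring
  simp only [heq]
  have hA : Integrable (fun t : ℝ => (t-m)^2 * normalPDF t m τ) := integrable_sub_sq_mul_normalPDF hτ m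
  have hB : Integrable (fun t : ℝ => 2*m*((t-m) * normalPDF t m τ)) :=
    (integrable_sub_mul_normalPDF hτ m).const_mul _
  have hC : Integrable (fun t : ℝ => m^2 * normalPDF t m τ) := (integrable_normalPDF hτ m).const_mul _
  have hAB : Integrable (fun t : ℝ => (t-m)^2 * normalPDF t m τ + 2*m*((t-m) * normalPDF t m τ)) :=
    hA.add hB
  rw [MeasureTheory.integral_add hAB hC, MeasureTheory.integral_add hA hB,
    MeasureTheory.integral_const_mul, MeasureTheory.integral_const_mul,
    integral_sub_sq_mul_normalPDF hτ m, integral_sub_mul_normalPDF hτ m,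
    integral_normalPDF hτ m]
  ring

lemma normalPDF_mul (t μ1 μ2 s1 s2 : ℝ) (h1 : 0 < s1) (h2 : 0 < s2) :
    normalPDF t μ1 s1 * normalPDF t μ2 s2 =
      normalPDF μ1 μ2 (s1 + s2) *
        normalPDF t ((μ1 * s2 + μ2 * s1) / (s1 + s2)) (s1 * s2 / (s1 + s2)) := by
  have hs : 0 < s1 + s2 := by linarith
  have hπ := Real.pi_pos
  unfold normalPDF
  have hsqrt : Real.sqrt (2*Real.pi*s1) * Real.sqrt (2*Real.pi*s2)
      = Real.sqrt (2*Real.pi*(s1+s2)) * Real.sqrt (2*Real.pi*(s1*s2/(s1+s2))) := by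
    rw [← Real.sqrt_mul (by positivity), ← Real.sqrt_mul (by positivity)]
    congr 1
    field_simp
  have hexp : -(t - μ1)^2 / (2*s1) + -(t - μ2)^2 / (2*s2)
      = -(μ1 - μ2)^2 / (2*(s1+s2)) + -(t - (μ1*s2 + μ2*s1)/(s1+s2))^2 / (2*(s1*s2/(s1+s2))) := by
    field_simp
    ring
  calc (√(2*π*s1))⁻¹ * rexp (-(t - μ1)^2 / (2*s1)) * ((√(2*π*s2))⁻¹ * rexp (-(t - μ2)^2 / (2*s2)))
      = (√(2*π*s1) * √(2*π*s2))⁻¹ *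
          rexp (-(t - μ1)^2 / (2*s1) + -(t - μ2)^2 / (2*s2)) := by
        rw [mul_inv, Real.exp_add]; ring
    _ = (√(2*π*(s1+s2)) * √(2*π*(s1*s2/(s1+s2))))⁻¹ *
          rexp (-(μ1 - μ2)^2 / (2*(s1+s2)) +
            -(t - (μ1*s2 + μ2*s1)/(s1+s2))^2 / (2*(s1*s2/(s1+s2)))) := by rw [hsqrt, hexp]
    _ = _ := by rw [mul_inv, Real.exp_add]; ring

lemma gaussKernel_eq_s8 {h : ℝ} (hh : 0 < h) (t : ℝ) : gaussKernel h t = normalPDF t 0 (h^2) := by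
  unfold gaussKernel normalPDF
  have h1 : Real.sqrt (2 * Real.pi * h^2) = Real.sqrt (2 * Real.pi) * h := by
    rw [Real.sqrt_mul (by positivity), Real.sqrt_sq hh.le]
  rw [h1, mul_one, sub_zero, sub_zero, mul_inv]
  have h2 : -(t/h)^2/(2*1) = -t^2/(2*h^2) := by
    rw [div_pow, neg_div, div_div, neg_div, mul_one, mul_comm (h^2) 2]
  rw [h2]
  ring

lemma normalPDF_shift (u a c : ℝ) : normalPDF (u + a) 0 c = normalPDF u (-a) c := by
  unfold normalPDF
  congr 3
  ring

lemma main_integral {h s : ℝ} (hh : 0 < h) (hs : 0 < s) (x z : ℝ) :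
    ∫ v, (z + v - x)^2 * gaussKernel h (z + v - x) * normalPDF v 0 s
      = h ^ 4 / (h ^ 2 + s) ^ 2 * (z - x) ^ 2 * normalPDF x z (h ^ 2 + s)
        + s * h ^ 2 / (h ^ 2 + s) * normalPDF x z (h ^ 2 + s) := by
  have hS : 0 < h^2 + s := by positivity
  have hτ : 0 < h^2 * s / (h^2 + s) := by positivity
  set m : ℝ := (z - x) * h^2 / (h^2 + s) with hm
  have key : ∀ u : ℝ, u^2 * normalPDF u 0 (h^2) * normalPDF (u + (x - z)) 0 s
      = normalPDF x z (h^2 + s) * (u^2 * normalPDF u m (h^2 * s / (h^2 + s))) := by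
    intro u
    rw [normalPDF_shift, show -(x - z) = z - x by ring]
    have hmul := normalPDF_mul u 0 (z - x) (h^2) s (by positivity) hs
    rw [show u^2 * normalPDF u 0 (h^2) * normalPDF u (z-x) s
        = u^2 * (normalPDF u 0 (h^2) * normalPDF u (z-x) s) by ring, hmul]
    rw [show (0 * s + (z - x) * h^2) / (h^2 + s) = m by rw [hm]; ring]
    rw [show normalPDF 0 (z - x) (h^2 + s) = normalPDF x z (h^2 + s) by
      unfold normalPDF; congr 3; ring]
    ring
  have step1 : ∀ v : ℝ, (z + v - x)^2 * gaussKernel h (z + v - x) * normalPDF v 0 s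
      = (fun u => u^2 * normalPDF u 0 (h^2) * normalPDF (u + (x - z)) 0 s) (v - (x - z)) := by
    intro v
    simp only
    rw [gaussKernel_eq_s8 hh]
    rw [show v - (x - z) + (x - z) = v by ring, show z + v - x = v - (x - z) by ring]
  simp only [step1]
  rw [MeasureTheory.integral_sub_right_eq_self
    (fun u => u^2 * normalPDF u 0 (h^2) * normalPDF (u + (x - z)) 0 s) (x - z)]
  simp only [key]
  rw [MeasureTheory.integral_const_mul, integral_sq_mul_normalPDF hτ m]
  rw [hm]
  field_simp

lemma integral_gaussianReal_pdf {s : NNReal} (hs : s ≠ 0) (g : ℝ → ℝ) :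
    ∫ v, g v ∂(gaussianReal 0 s) = ∫ v, g v * normalPDF v 0 (s:ℝ) := by
  rw [gaussianReal_of_var_ne_zero 0 hs]
  have h1 : (gaussianPDF 0 s) = fun x => ((Real.toNNReal (gaussianPDFReal 0 s x) : NNReal) : ENNReal) := rfl
  rw [h1, integral_withDensity_eq_integral_smul ((measurable_gaussianPDFReal 0 s).real_toNNReal) g]
  congr 1
  funext v
  rw [NNReal.smul_def, smul_eq_mul, Real.coe_toNNReal _ (gaussianPDFReal_nonneg 0 s v), mul_comm]
  rfl

end Aux

theorem condexp_quadratic_gaussKernel {Ω : Type*} [MeasurableSpace Ω] (P : Measure Ω)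
    [IsProbabilityMeasure P] (Z V : Ω → ℝ) (hZ : Measurable Z) (hV : Measurable V)
    (h lam σu : ℝ) (hh : 0 < h) (hlam : 0 < lam) (hσu : 0 < σu)
    (hindep : IndepFun Z V P)
    (hVlaw : Measure.map V P = gaussianReal 0 (Real.toNNReal (lam * σu^2)))
    (x : ℝ) :
    P[(fun ω => (Z ω + V ω - x)^2 * gaussKernel h (Z ω + V ω - x)) |
        MeasurableSpace.comap Z (borel ℝ)]
      =ᵐ[P] fun ω =>
        (h^4 / (h^2 + lam * σu^2)^2) * (Z ω - x)^2 * normalPDF x (Z ω) (h^2 + lam * σu^2)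
          + (lam * σu^2 * h^2 / (h^2 + lam * σu^2)) * normalPDF x (Z ω) (h^2 + lam * σu^2) := by
  have hs : 0 < lam * σu^2 := by positivity
  have hsn : ((Real.toNNReal (lam * σu^2)) : ℝ) = lam * σu^2 := Real.coe_toNNReal _ hs.le
  have hsn0 : Real.toNNReal (lam * σu^2) ≠ 0 := (Real.toNNReal_pos.mpr hs).ne'
  haveI : IsProbabilityMeasure (P.map Z) := Measure.isProbabilityMeasure_map hZ.aemeasurable
  -- continuity of the integrand
  have hcont : Continuous (fun p : ℝ × ℝ => (p.1 + p.2 - x)^2 * gaussKernel h (p.1 + p.2 - x)) := by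
    unfold gaussKernel normalPDF
    fun_prop
  -- integrability
  have hfint : Integrable (fun ω => (Z ω + V ω - x)^2 * gaussKernel h (Z ω + V ω - x)) P := by
    refine Integrable.mono' (integrable_const ((Real.sqrt (2 * Real.pi * h^2))⁻¹ * (4 * h^2)))
      ((hcont.measurable.comp (hZ.prodMk hV)).aestronglyMeasurable)
      (Filter.Eventually.of_forall fun ω => ?_)
    set t := Z ω + V ω - x
    rw [Real.norm_eq_abs, gaussKernel_eq_s8 hh,
      abs_of_nonneg (mul_nonneg (sq_nonneg t) (normalPDF_nonneg _ _ _))]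
    rw [normalPDF_eq, sub_zero, ← mul_assoc, mul_comm (t^2), mul_assoc]
    refine mul_le_mul_of_nonneg_left ?_ (by positivity)
    calc t^2 * Real.exp (-(2*h^2)⁻¹ * t^2) ≤ 2 / (2*h^2)⁻¹ :=
        sq_mul_exp_neg_mul_sq_le (by positivity) t
      _ = 4 * h^2 := by field_simp; ring
  -- the conditional distribution of V given Z is the Gaussian law
  have hmap : P.map (fun ω => (Z ω, V ω))
      = (P.map Z) ⊗ₘ Kernel.const ℝ (gaussianReal 0 (Real.toNNReal (lam * σu^2))) := by
    rw [Measure.compProd_const, ← hVlaw]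
    exact (ProbabilityTheory.indepFun_iff_map_prod_eq_prod_map_map hZ.aemeasurable
      hV.aemeasurable).mp hindep
  have hcd := condDistrib_ae_eq_of_measure_eq_compProd_of_measurable hZ hV
    (κ := Kernel.const ℝ (gaussianReal 0 (Real.toNNReal (lam * σu^2)))) hmap
  have hcd' : ∀ᵐ ω ∂P,
      (Kernel.const ℝ (gaussianReal 0 (Real.toNNReal (lam * σu^2)))) (Z ω)
        = condDistrib V Z P (Z ω) := (ae_of_ae_map hZ.aemeasurable hcd).mono fun _ h => h.symm
  have h4 := condExp_prod_ae_eq_integral_condDistrib (μ := P) (X := Z) (Y := V)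
    (f := fun p : ℝ × ℝ => (p.1 + p.2 - x)^2 * gaussKernel h (p.1 + p.2 - x))
    hZ hV.aemeasurable hcont.stronglyMeasurable hfint
  refine h4.trans ?_
  filter_upwards [hcd'] with ω hω
  rw [← hω, Kernel.const_apply, integral_gaussianReal_pdf hsn0, hsn]
  exact main_integral hh hs x (Z ω)
end

section
/- Let g, f_X: ℝ → ℝ with f_X a probability density, g·f_X integrable, and suppose g·f_X and f_X are four times continuously differentiable with all derivatives up to order 4 integrable against Gaussians. Define Γ(λ) = (∫ g(t) f_X(t) φ(t; x, (λ+1)σ_u²) dt) / (∫ f_X(t) φ(t; x, (λ+1)σ_u²) dt) for λ > −1. If f_X(x) > 0, then Γ(λ) → g(x) as λ → −1⁺. -/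
open MeasureTheory Real Filter

lemma change_of_var (h : ℝ → ℝ) (x : ℝ) {v : ℝ} (hv : 0 < v) :
    ∫ t, (if |t - x| ≤ 1 then h t else 0) * normalPDF t x v
      = ∫ u, (if |Real.sqrt v * u| ≤ 1 then h (x + Real.sqrt v * u) else 0) * normalPDF u 0 1 := by
  have hsv : (0:ℝ) < Real.sqrt v := Real.sqrt_pos.mpr hv
  set G : ℝ → ℝ := fun s => (if |s| ≤ 1 then h (x + s) else 0) * normalPDF s 0 v with hG
  have h1 : ∫ t, (if |t - x| ≤ 1 then h t else 0) * normalPDF t x v = ∫ t, G (t - x) := by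
    congr 1; funext t
    have hx : x + (t - x) = t := by ring
    simp only [hG, hx, normalPDF, sub_zero]
  have h2 : ∫ t, G (t - x) = ∫ s, G s := integral_sub_right_eq_self G x
  have h3 : (∫ u, G (Real.sqrt v * u)) = |(Real.sqrt v)⁻¹| • ∫ s, G s :=
    Measure.integral_comp_mul_left G (Real.sqrt v)
  have h4 : ∫ s, G s = Real.sqrt v * ∫ u, G (Real.sqrt v * u) := by
    rw [h3, abs_of_pos (inv_pos.mpr hsv), smul_eq_mul]
    field_simp
  have h5 : Real.sqrt v * ∫ u, G (Real.sqrt v * u)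
      = ∫ u, (if |Real.sqrt v * u| ≤ 1 then h (x + Real.sqrt v * u) else 0) * normalPDF u 0 1 := by
    rw [← integral_const_mul]
    congr 1; funext u
    simp only [hG, normalPDF, sub_zero]
    rw [mul_left_comm]
    congr 1
    have hsq : (Real.sqrt v * u) ^ 2 = v * u ^ 2 := by
      rw [mul_pow, Real.sq_sqrt hv.le]
    rw [hsq, mul_one]
    have hexp : -(v * u ^ 2) / (2 * v) = -u ^ 2 / (2 * 1) := by
      field_simp
    rw [hexp, ← mul_assoc]
    congr 1
    rw [Real.sqrt_mul (by positivity : (0:ℝ) ≤ 2 * Real.pi) v, mul_inv]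
    field_simp
  rw [h1, h2, h4, h5]

lemma normalPDF_nonneg_s15 (t y : ℝ) {v : ℝ} (hv : 0 < v) : 0 ≤ normalPDF t y v := by
  unfold normalPDF; positivity

lemma std_integrable : Integrable (fun u => normalPDF u 0 1) :=
  ProbabilityTheory.integrable_gaussianPDFReal 0 1

lemma std_integral_one : ∫ u, normalPDF u 0 1 = 1 :=
  ProbabilityTheory.integral_gaussianPDFReal_eq_one 0 one_ne_zero

lemma near_tendsto (h : ℝ → ℝ) (hcont : Continuous h) (x : ℝ) :
    Tendsto (fun v => ∫ u, (if |Real.sqrt v * u| ≤ 1 then h (x + Real.sqrt v * u) else 0)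
        * normalPDF u 0 1) (nhdsWithin 0 (Set.Ioi 0)) (nhds (h x)) := by
  obtain ⟨C, hC⟩ := (isCompact_closedBall x 1).exists_bound_of_continuousOn hcont.continuousOn
  have hC0 : 0 ≤ C := le_trans (norm_nonneg _) (hC x (Metric.mem_closedBall_self zero_le_one))
  have key : Tendsto (fun v => ∫ u, (if |Real.sqrt v * u| ≤ 1 then h (x + Real.sqrt v * u) else 0)
      * normalPDF u 0 1) (nhdsWithin 0 (Set.Ioi 0)) (nhds (∫ u, h x * normalPDF u 0 1)) := by
    apply tendsto_integral_filter_of_dominated_convergence (fun u => C * normalPDF u 0 1)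
    · filter_upwards with v
      apply Measurable.aestronglyMeasurable
      apply Measurable.mul _ (by unfold normalPDF; fun_prop)
      exact Measurable.ite (measurableSet_le (by fun_prop) measurable_const)
        (by fun_prop) measurable_const
    · filter_upwards with v
      filter_upwards with u
      have hn : 0 ≤ normalPDF u 0 1 := normalPDF_nonneg_s15 u 0 one_pos
      rw [norm_mul, Real.norm_of_nonneg hn]
      apply mul_le_mul_of_nonneg_right _ hn
      split_ifs with hc
      · exact hC _ (by simpa [Metric.mem_closedBall, Real.dist_eq, abs_sub_comm, abs_mul] using hc)
      · simpa using hC0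
    · exact std_integrable.const_mul C
    · filter_upwards with u
      have h1 : Tendsto (fun v : ℝ => Real.sqrt v * u) (nhdsWithin 0 (Set.Ioi 0)) (nhds 0) := by
        have := (Real.continuous_sqrt.tendsto 0).mono_left (nhdsWithin_le_nhds (s := Set.Ioi 0))
        simpa using this.mul_const u
      have h2 : Tendsto (fun v : ℝ => h (x + Real.sqrt v * u))
          (nhdsWithin 0 (Set.Ioi 0)) (nhds (h x)) := by
        have : Tendsto (fun v : ℝ => x + Real.sqrt v * u) (nhdsWithin 0 (Set.Ioi 0)) (nhds x) := by
          simpa using (tendsto_const_nhds.add h1)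
        exact (hcont.tendsto x).comp this
      have hev : ∀ᶠ v in nhdsWithin 0 (Set.Ioi 0),
          (if |Real.sqrt v * u| ≤ 1 then h (x + Real.sqrt v * u) else 0)
            = h (x + Real.sqrt v * u) := by
        have : ∀ᶠ v in nhdsWithin 0 (Set.Ioi 0), |Real.sqrt v * u| ≤ 1 := by
          have habs : Tendsto (fun v : ℝ => |Real.sqrt v * u|) (nhdsWithin 0 (Set.Ioi 0))
              (nhds 0) := by simpa using h1.abs
          exact habs.eventually_le_const one_pos
        filter_upwards [this] with v hv using if_pos hv
      exact (((Tendsto.congr' (hev.mono fun v hv => hv.symm) h2)).mul_const (normalPDF u 0 1))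
  have : ∫ u, h x * normalPDF u 0 1 = h x := by
    rw [integral_const_mul, std_integral_one, mul_one]
  rwa [this] at key

lemma normalPDF_le (t y : ℝ) {v : ℝ} (hv : 0 < v) :
    normalPDF t y v ≤ (Real.sqrt (2 * Real.pi * v))⁻¹ := by
  unfold normalPDF
  have h1 : Real.exp (-(t - y)^2 / (2 * v)) ≤ 1 := by
    apply Real.exp_le_one_iff.mpr
    apply div_nonpos_of_nonpos_of_nonneg (neg_nonpos.mpr (sq_nonneg _)) (by positivity)
  calc (Real.sqrt (2 * Real.pi * v))⁻¹ * Real.exp (-(t - y)^2 / (2 * v))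
      ≤ (Real.sqrt (2 * Real.pi * v))⁻¹ * 1 := by
        apply mul_le_mul_of_nonneg_left h1 (by positivity)
    _ = _ := mul_one _

lemma normalPDF_far_le (t y : ℝ) {v : ℝ} (hv : 0 < v) (hfar : 1 ≤ |t - y|) :
    normalPDF t y v ≤ (Real.sqrt (2 * Real.pi * v))⁻¹ * Real.exp (-1 / (2 * v)) := by
  unfold normalPDF
  apply mul_le_mul_of_nonneg_left _ (by positivity)
  apply Real.exp_le_exp.mpr
  have h1 : (1:ℝ) ≤ (t - y)^2 := by nlinarith [sq_abs (t - y), abs_nonneg (t - y)]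
  have h2 : (0:ℝ) < 2 * v := by positivity
  rw [div_le_div_iff₀ h2 h2]
  nlinarith

lemma gauss_approx (h : ℝ → ℝ) (hcont : Continuous h) (hint : Integrable h) (x : ℝ) :
    Tendsto (fun v => ∫ t, h t * normalPDF t x v) (nhdsWithin 0 (Set.Ioi 0)) (nhds (h x)) := by
  set N : ℝ → ℝ := fun v => ∫ t, (if |t - x| ≤ 1 then h t else 0) * normalPDF t x v with hN
  -- integrability facts for v > 0
  have hmeas : ∀ v : ℝ, 0 < v → AEStronglyMeasurable (fun t => normalPDF t x v) volume := by
    intro v hv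
    apply Continuous.aestronglyMeasurable
    unfold normalPDF; fun_prop
  have hint1 : ∀ v : ℝ, 0 < v → Integrable (fun t => h t * normalPDF t x v) := by
    intro v hv
    have := hint.bdd_mul (c := (Real.sqrt (2 * Real.pi * v))⁻¹) (hmeas v hv) (Filter.Eventually.of_forall fun t => by
      rw [Real.norm_of_nonneg (normalPDF_nonneg_s15 t x hv)]; exact normalPDF_le t x hv)
    exact this.congr (by filter_upwards with t using mul_comm _ _)
  have hint2 : ∀ v : ℝ, 0 < v →
      Integrable (fun t => (if |t - x| ≤ 1 then h t else 0) * normalPDF t x v) := by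
    intro v hv
    apply (hint1 v hv).mono
    · apply AEStronglyMeasurable.mul _ (hmeas v hv)
      apply Measurable.aestronglyMeasurable
      exact Measurable.ite (measurableSet_le (by fun_prop) measurable_const)
        (hcont.measurable) measurable_const
    · filter_upwards with t
      rw [norm_mul, norm_mul]
      apply mul_le_mul_of_nonneg_right _ (norm_nonneg _)
      split_ifs <;> simp [norm_nonneg]
  -- the difference tends to 0
  have hdiff : Tendsto (fun v => (∫ t, h t * normalPDF t x v) - N v)
      (nhdsWithin 0 (Set.Ioi 0)) (nhds 0) := by
    set A := ∫ t, ‖h t‖ with hA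
    have hA0 : 0 ≤ A := integral_nonneg fun t => norm_nonneg _
    set B : ℝ → ℝ := fun v => (Real.sqrt (2 * Real.pi * v))⁻¹ * Real.exp (-1 / (2 * v)) with hB
    have hbound : ∀ᶠ v in nhdsWithin 0 (Set.Ioi 0),
        ‖(∫ t, h t * normalPDF t x v) - N v‖ ≤ B v * A := by
      filter_upwards [self_mem_nhdsWithin] with v hv
      have hv : 0 < v := hv
      rw [← integral_sub (hint1 v hv) (hint2 v hv)]
      calc ‖∫ t, (h t * normalPDF t x v - (if |t - x| ≤ 1 then h t else 0) * normalPDF t x v)‖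
          ≤ ∫ t, B v * ‖h t‖ := by
            apply norm_integral_le_of_norm_le ((hint.norm).const_mul (B v))
            filter_upwards with t
            by_cases hc : |t - x| ≤ 1
            · simp only [if_pos hc, sub_self, norm_zero]
              positivity
            · simp only [if_neg hc]
              rw [← sub_mul, sub_zero, norm_mul]
              rw [mul_comm (B v) _]
              apply mul_le_mul_of_nonneg_left _ (norm_nonneg _)
              rw [Real.norm_of_nonneg (normalPDF_nonneg_s15 t x hv)]
              exact normalPDF_far_le t x hv (le_of_lt (not_le.mp hc))
        _ = B v * A := integral_const_mul _ _
    have hB0 : Tendsto B (nhdsWithin 0 (Set.Ioi 0)) (nhds 0) := by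
      have base : Tendsto (fun w : ℝ => w ^ ((1:ℝ)/2) * Real.exp (-(1/2) * w)) atTop (nhds 0) :=
        tendsto_rpow_mul_exp_neg_mul_atTop_nhds_zero (1/2) (1/2) one_half_pos
      have hinv : Tendsto (fun v : ℝ => v⁻¹) (nhdsWithin 0 (Set.Ioi 0)) atTop :=
        tendsto_inv_nhdsGT_zero
      have comp := base.comp hinv
      have heq : ∀ᶠ v in nhdsWithin 0 (Set.Ioi 0),
          ((fun w : ℝ => w ^ ((1:ℝ)/2) * Real.exp (-(1/2) * w)) ∘ (fun v => v⁻¹)) v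
            = (Real.sqrt v)⁻¹ * Real.exp (-1 / (2 * v)) := by
        filter_upwards [self_mem_nhdsWithin] with v hv
        have hv : 0 < v := hv
        simp only [Function.comp_apply]
        congr 1
        · rw [← Real.sqrt_eq_rpow, Real.sqrt_inv]
        · congr 1
          field_simp
      have h1 : Tendsto (fun v : ℝ => (Real.sqrt v)⁻¹ * Real.exp (-1 / (2 * v)))
          (nhdsWithin 0 (Set.Ioi 0)) (nhds 0) := Tendsto.congr' heq comp
      have h2 := h1.const_mul (Real.sqrt (2 * Real.pi))⁻¹
      rw [mul_zero] at h2
      apply h2.congr'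
      filter_upwards [self_mem_nhdsWithin] with v hv
      have hv : 0 < v := hv
      rw [hB]
      simp only
      rw [Real.sqrt_mul (by positivity : (0:ℝ) ≤ 2 * Real.pi) v, mul_inv, mul_assoc]
    have := hB0.mul_const A
    rw [zero_mul] at this
    exact squeeze_zero_norm' hbound this
  -- near part
  have hnear : Tendsto N (nhdsWithin 0 (Set.Ioi 0)) (nhds (h x)) := by
    have := near_tendsto h hcont x
    apply this.congr'
    filter_upwards [self_mem_nhdsWithin] with v hv
    exact (change_of_var h x hv).symm
  have := hnear.add hdiff
  rw [add_zero] at this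
  apply this.congr'
  filter_upwards with v
  ring

theorem extrapolation_limit (g fX : ℝ → ℝ) (σu x : ℝ) (hσu : 0 < σu)
    (hfX_nonneg : ∀ t, 0 ≤ fX t) (hfX_int : ∫ t, fX t = 1)
    (hgfX_int : Integrable (fun t => g t * fX t))
    (hfX_smooth : ContDiff ℝ 4 fX)
    (hgfX_smooth : ContDiff ℝ 4 (fun t => g t * fX t))
    (hfX_gauss : ∀ k ≤ 4, ∀ v > 0, ∀ y : ℝ,
      Integrable (fun t => iteratedDeriv k fX t * normalPDF t y v))
    (hgfX_gauss : ∀ k ≤ 4, ∀ v > 0, ∀ y : ℝ,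
      Integrable (fun t => iteratedDeriv k (fun s => g s * fX s) t * normalPDF t y v))
    (hg_cont : ContinuousAt g x) (hfx_pos : 0 < fX x) :
    Tendsto
      (fun lam : ℝ =>
        (∫ t, g t * fX t * normalPDF t x ((lam + 1) * σu^2))
          / (∫ t, fX t * normalPDF t x ((lam + 1) * σu^2)))
      (nhdsWithin (-1) (Set.Ioi (-1))) (nhds (g x)) := by
  have hfX_integrable : Integrable fX := by
    by_contra hc
    rw [integral_undef hc] at hfX_int
    norm_num at hfX_int
  have hcomp : Tendsto (fun lam : ℝ => (lam + 1) * σu^2)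
      (nhdsWithin (-1) (Set.Ioi (-1))) (nhdsWithin 0 (Set.Ioi 0)) := by
    rw [tendsto_nhdsWithin_iff]
    constructor
    · have h0 : Tendsto (fun lam : ℝ => (lam + 1) * σu^2) (nhds (-1)) (nhds 0) := by
        have hc : Continuous fun lam : ℝ => (lam + 1) * σu^2 := by continuity
        simpa using hc.tendsto (-1)
      exact h0.mono_left nhdsWithin_le_nhds
    · filter_upwards [self_mem_nhdsWithin] with lam hlam
      have h1 : (0:ℝ) < lam + 1 := by
        have : (-1:ℝ) < lam := hlam
        linarith
      exact mul_pos h1 (by positivity)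
  have hnum := (gauss_approx (fun t => g t * fX t) hgfX_smooth.continuous hgfX_int x).comp hcomp
  have hden := (gauss_approx fX hfX_smooth.continuous hfX_integrable x).comp hcomp
  have hlim := hnum.div hden (ne_of_gt hfx_pos)
  have heq : g x * fX x / fX x = g x := by field_simp
  rw [heq] at hlim
  exact hlim
end

section
/- Let Y_i = α + βX_i + ε_i with E[ε_i | X_i] = 0, and Z_i = X_i + U_i where U_i ~ N(0, σ_u²). For λ > −1 and given data (Y_i, Z_i), the minimizer of the conditional expected least-squares criterion E[Σᵢ (Y_i − a − b(Z_i + √λ V_i))² | data], where V_i ~ N(0, σ_u²) are i.i.d. independent of the data, equals the minimizer of Σᵢ (Y_i − a − bZ_i)² + nλ b² σ_u²; consequently the minimizing slope is b̂(λ) = S_{YZ}/(S_{ZZ} + λσ_u²), where S_{ZZ} = n^{-1}Σᵢ(Z_i − Z̄)² and S_{YZ} = n^{-1}Σᵢ(Z_i − Z̄)(Y_i − Ȳ). -/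
open MeasureTheory Real

theorem simex_linear_regression {Ω : Type*} [MeasurableSpace Ω] (P : Measure Ω)
    [IsProbabilityMeasure P] (n : ℕ) (hn : 0 < n) (Y Z : Fin n → ℝ)
    (σu lam : ℝ) (hσu : 0 < σu) (hlam : 0 ≤ lam)
    (V : Fin n → Ω → ℝ)
    (hVmeas : ∀ i, Measurable (V i))
    (hVint : ∀ i, Integrable (V i) P)
    (hVsqint : ∀ i, Integrable (fun ω => (V i ω)^2) P)
    (hVmean : ∀ i, ∫ ω, V i ω ∂P = 0)
    (hVvar : ∀ i, ∫ ω, (V i ω)^2 ∂P = σu^2)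
    (Zbar Ybar SZZ SYZ : ℝ)
    (hZbar : Zbar = (n : ℝ)⁻¹ * ∑ i, Z i)
    (hYbar : Ybar = (n : ℝ)⁻¹ * ∑ i, Y i)
    (hSZZ : SZZ = (n : ℝ)⁻¹ * ∑ i, (Z i - Zbar)^2)
    (hSYZ : SYZ = (n : ℝ)⁻¹ * ∑ i, (Z i - Zbar) * (Y i - Ybar))
    (hpos : 0 < SZZ + lam * σu^2) :
    (∀ a b : ℝ,
      (∫ ω, ∑ i, (Y i - a - b * (Z i + Real.sqrt lam * V i ω))^2 ∂P)
        = (∑ i, (Y i - a - b * Z i)^2) + n * lam * b^2 * σu^2) ∧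
    (∀ a b : ℝ,
      (∑ i, (Y i - (Ybar - (SYZ / (SZZ + lam * σu^2)) * Zbar)
              - (SYZ / (SZZ + lam * σu^2)) * Z i)^2)
          + n * lam * (SYZ / (SZZ + lam * σu^2))^2 * σu^2
        ≤ (∑ i, (Y i - a - b * Z i)^2) + n * lam * b^2 * σu^2) := by
  have hn0 : (n : ℝ) ≠ 0 := Nat.cast_ne_zero.mpr hn.ne'
  have hsq : Real.sqrt lam ^ 2 = lam := Real.sq_sqrt hlam
  constructor
  · intro a b
    have heq : ∀ i : Fin n, (fun ω => (Y i - a - b * (Z i + Real.sqrt lam * V i ω))^2)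
        = fun ω => ((Y i - a - b * Z i)^2
            + (-(2 * (Y i - a - b * Z i) * (b * Real.sqrt lam))) * V i ω)
            + (b^2 * lam) * (V i ω)^2 := by
      intro i
      funext ω
      have : b^2 * lam = (b * Real.sqrt lam)^2 := by rw [mul_pow, hsq]
      rw [this]; ring
    have hint1 : ∀ i : Fin n, Integrable (fun ω => (Y i - a - b * Z i)^2
        + (-(2 * (Y i - a - b * Z i) * (b * Real.sqrt lam))) * V i ω) P := by
      intro i
      exact (integrable_const _).add ((hVint i).const_mul _)
    have hterm : ∀ i : Fin n,
        (∫ ω, (Y i - a - b * (Z i + Real.sqrt lam * V i ω))^2 ∂P)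
          = (Y i - a - b * Z i)^2 + lam * b^2 * σu^2 := by
      intro i
      rw [heq i, integral_add (hint1 i) ((hVsqint i).const_mul _),
          integral_add (integrable_const _) ((hVint i).const_mul _),
          integral_const_mul, integral_const_mul, hVmean i, hVvar i]
      simp only [integral_const, probReal_univ, ENNReal.toReal_one, smul_eq_mul,
        one_mul, mul_zero, add_zero]
      ring
    rw [integral_finset_sum]
    · rw [Finset.sum_congr rfl fun i _ => hterm i, Finset.sum_add_distrib]
      simp only [Finset.sum_const, Finset.card_univ, Fintype.card_fin, nsmul_eq_mul]
      try ring
    · intro i _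
      rw [heq i]
      exact (hint1 i).add ((hVsqint i).const_mul _)
  · intro a b
    set s : ℝ := SZZ + lam * σu^2 with hs
    set bh : ℝ := SYZ / s with hbh
    have hbhs : SYZ = bh * s := (div_mul_cancel₀ _ hpos.ne').symm
    have hsumY : ∑ i, (Y i - Ybar) = 0 := by
      rw [Finset.sum_sub_distrib, Finset.sum_const, Finset.card_univ]
      rw [hYbar]; field_simp
      rw [Fintype.card_fin, nsmul_eq_mul, mul_div_cancel₀ _ hn0, sub_self]
    have hsumZ : ∑ i, (Z i - Zbar) = 0 := by
      rw [Finset.sum_sub_distrib, Finset.sum_const, Finset.card_univ]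
      rw [hZbar]; field_simp
      rw [Fintype.card_fin, nsmul_eq_mul, mul_div_cancel₀ _ hn0, sub_self]
    have hSZZ' : ∑ i, (Z i - Zbar)^2 = n * SZZ := by
      rw [hSZZ]; field_simp
    have hSYZ' : ∑ i, (Z i - Zbar) * (Y i - Ybar) = n * SYZ := by
      rw [hSYZ]; field_simp
    have key : ∀ a b : ℝ, ∑ i, (Y i - a - b * Z i)^2
        = (∑ i, (Y i - Ybar)^2) - 2 * b * (n * SYZ) + b^2 * (n * SZZ)
          + 2 * (Ybar - a - b * Zbar) * (∑ i, (Y i - Ybar))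
          - 2 * b * (Ybar - a - b * Zbar) * (∑ i, (Z i - Zbar))
          + n * (Ybar - a - b * Zbar)^2 := by
      intro a b
      rw [← hSZZ', ← hSYZ']
      rw [Finset.sum_congr rfl (fun i _ => show (Y i - a - b * Z i)^2
        = (Y i - Ybar)^2 - 2 * b * ((Z i - Zbar) * (Y i - Ybar))
          + b^2 * (Z i - Zbar)^2
          + 2 * (Ybar - a - b * Zbar) * (Y i - Ybar)
          - 2 * b * (Ybar - a - b * Zbar) * (Z i - Zbar)
          + (Ybar - a - b * Zbar)^2 from by ring)]
      simp only [Finset.sum_add_distrib, Finset.sum_sub_distrib,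
        ← Finset.mul_sum, Finset.sum_const, Finset.card_univ, Fintype.card_fin,
        nsmul_eq_mul]
      try ring
    rw [key a b, key (Ybar - bh * Zbar) bh, hsumY, hsumZ]
    have h1 : Ybar - (Ybar - bh * Zbar) - bh * Zbar = 0 := by ring
    rw [h1]
    have hSZZeq : SZZ = s - lam * σu^2 := by rw [hs]; ring
    have hnn : (0:ℝ) ≤ (n:ℝ) := Nat.cast_nonneg n
    rw [hbhs, hSZZeq]
    nlinarith [mul_nonneg hnn (mul_nonneg hpos.le (sq_nonneg (b - bh))),
      mul_nonneg hnn (sq_nonneg (Ybar - a - b * Zbar))]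
end
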